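/- (Lemma 12) Let ∇F_{π_ℓ}(𝐱_t^ℓ) ∈ ℝ^{n×p} denote the matrix whose i-th row is ∇f_{i,π_ℓ^i}(x_{i,t}^ℓ). Then for all t, ℓ: E[‖∇F_{π_ℓ}(𝐱_t^ℓ)‖²] ≤ 6L²n E[‖x̄_t^{ℓ} − x̄_*^{ℓ}‖²] + 6L² E[‖𝐱_t^{ℓ} − 𝟏(x̄_t^{ℓ})^⊺‖²] + 3n σ_*² + 6nL σ_shuffle². -/

import Mathlib

/-!
Per agent, split `∇f(xᵢ) = (∇f(xᵢ) - ∇f(x̄_*)) + (∇f(x̄_*) - ∇f(x*)) + ∇f(x*)` and use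
`‖a + b + c‖² ≤ 3(‖a‖² + ‖b‖² + ‖c‖²)`. The first term is controlled by `L`-smoothness together
with `‖xᵢ - x̄_*‖² ≤ 2‖xᵢ - x̄‖² + 2‖x̄ - x̄_*‖²`; the second by co-coercivity of the gradient of a
convex `L`-smooth function, `‖∇f(u) - ∇f(v)‖² ≤ 2L D_f(u, v)` with `D_f` the Bregman divergence.
In expectation the Bregman terms average to at most `σ_shuffle²`, and the last terms to `n σ_*²`
because `π_ℓ^i` is uniformly distributed on `{1, …, m}`.
-/

open Finset
open scoped RealInnerProductSpace

noncomputable section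

namespace DRR

/-- Vectors in ℝ^p. -/
abbrev Vec (p : ℕ) := EuclideanSpace ℝ (Fin p)

/-- Sample space: one permutation of `[m]` per agent and per epoch. -/
abbrev Omega (n m : ℕ) := ℕ → Fin n → Equiv.Perm (Fin m)

/-- Expectation of a quantity that depends only on the permutations of the first `T`
epochs: the finite uniform average over those coordinates (unused later coordinates
are frozen to the identity permutation). -/
noncomputable def expE {n m : ℕ} (T : ℕ) (g : Omega n m → ℝ) : ℝ :=
  (∑ σ : Fin T → Fin n → Equiv.Perm (Fin m),
      g fun k i => if h : k < T then σ ⟨k, h⟩ i else 1) /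
    Fintype.card (Fin T → Fin n → Equiv.Perm (Fin m))

/-- Expectation over a single epoch's permutations. -/
noncomputable def expPerm {n m : ℕ} (g : (Fin n → Equiv.Perm (Fin m)) → ℝ) : ℝ :=
  (∑ π : Fin n → Equiv.Perm (Fin m), g π) / Fintype.card (Fin n → Equiv.Perm (Fin m))

/-- Spectral norm (ℓ₂ operator norm) of W − (1/n)𝟏𝟏ᵀ. -/
noncomputable def rhoW {n : ℕ} (W : Matrix (Fin n) (Fin n) ℝ) : ℝ :=
  ‖LinearMap.toContinuousLinearMap
      (Matrix.toEuclideanLin (W - (n : ℝ)⁻¹ • Matrix.of fun _ _ => (1 : ℝ)))‖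

/-- Average x̄ of the agents' vectors. -/
noncomputable def avg {n p : ℕ} (x : Fin n → Vec p) : Vec p := (n : ℝ)⁻¹ • ∑ i, x i

/-- Squared Frobenius consensus error ‖𝐱 − 𝟏x̄ᵀ‖². -/
noncomputable def consSq {n p : ℕ} (x : Fin n → Vec p) : ℝ := ∑ i, ‖x i - avg x‖ ^ 2

/-- The "real limit points" x̄_*^ℓ = x* − α ∑_{k<ℓ} (1/n) ∑_i ∇f_{i,π_k^i}(x*). -/
noncomputable def xbarStar {n m p : ℕ} (f : Fin n → Fin m → Vec p → ℝ) (xstar : Vec p)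
    (α : ℝ) (π : Fin n → Equiv.Perm (Fin m)) (ℓ : ℕ) : Vec p :=
  xstar - α • ∑ k ∈ univ.filter fun k : Fin m => (k : ℕ) < ℓ,
    (n : ℝ)⁻¹ • ∑ i, gradient (f i (π i k)) xstar

/-- σ_*² := (1/(mn)) ∑_i ∑_ℓ ‖∇f_{i,ℓ}(x*)‖². -/
noncomputable def sigStarSq {n m p : ℕ} (f : Fin n → Fin m → Vec p → ℝ) (xstar : Vec p) : ℝ :=
  ((m : ℝ) * n)⁻¹ * ∑ i, ∑ ℓ, ‖gradient (f i ℓ) xstar‖ ^ 2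

/-- The shuffling variance σ_shuffle² for stepsize α. -/
noncomputable def sigShuffleSq {n m p : ℕ} (f : Fin n → Fin m → Vec p → ℝ) (xstar : Vec p)
    (α : ℝ) : ℝ :=
  ⨆ ℓ : Fin m, expPerm fun π =>
    ((n : ℝ)⁻¹ * ∑ i, f i (π i ℓ) (xbarStar f xstar α π ℓ))
      - ((n : ℝ)⁻¹ * ∑ i, f i (π i ℓ) xstar)
      - (inner ℝ ((n : ℝ)⁻¹ • ∑ i, gradient (f i (π i ℓ)) xstar)
          (xbarStar f xstar α π ℓ - xstar) : ℝ)

/-- Condition (A) on the stepsize. -/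
def condA (ρ μ L α : ℝ) : Prop :=
  α ≤ min (Real.sqrt ((2 - ρ ^ 2) / (24 * ρ ^ 2 * (5 - ρ ^ 2))) * (1 - ρ ^ 2) / L)
      (min ((1 - ρ ^ 2) / (2 * μ)) ((1 - ρ ^ 2) * μ / (8 * Real.sqrt 30 * L ^ 2)))

/-- The Lyapunov function H_t^ℓ. -/
noncomputable def Hfun {n m p : ℕ} (W : Matrix (Fin n) (Fin n) ℝ)
    (f : Fin n → Fin m → Vec p → ℝ) (xstar : Vec p) (μ L : ℝ) (α : ℕ → ℝ)
    (x : Omega n m → ℕ → ℕ → Fin n → Vec p) (t ℓ : ℕ) : ℝ :=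
  expE (t + 1) (fun ω => ‖avg (x ω t ℓ) - xbarStar f xstar (α t) (ω t) ℓ‖ ^ 2)
    + (16 * α t * L ^ 2 / (n * μ * (1 - rhoW W ^ 2)))
        * expE (t + 1) (fun ω => consSq (x ω t ℓ))

end DRR

open scoped BigOperators

lemma norm_add₃_sq_le {E : Type*} [SeminormedAddCommGroup E] (a b c : E) :
    ‖a + b + c‖ ^ 2 ≤ 3 * (‖a‖ ^ 2 + ‖b‖ ^ 2 + ‖c‖ ^ 2) := by
  have htri := norm_add₃_le (a := a) (b := b) (c := c)
  have hnonneg := norm_nonneg (a + b + c)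
  nlinarith [sq_nonneg (‖a‖ - ‖b‖), sq_nonneg (‖b‖ - ‖c‖), sq_nonneg (‖a‖ - ‖c‖)]

section Bregman

variable {E : Type*} [NormedAddCommGroup E] [InnerProductSpace ℝ E] [CompleteSpace E]
  {g : E → ℝ} {L : ℝ}

def bregman (g : E → ℝ) (x y : E) : ℝ := g x - g y - ⟪gradient g y, x - y⟫

lemma hasDerivAt_comp_add_smul_sub_inner_gradient (hg : Differentiable ℝ g) (y d : E) (s : ℝ) :
    HasDerivAt (fun s : ℝ => g (y + s • d) - s * ⟪gradient g y, d⟫)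
      ⟪gradient g (y + s • d) - gradient g y, d⟫ s := by
  have hline : HasDerivAt (fun s : ℝ => y + s • d) d s := by
    simpa using ((hasDerivAt_id s).smul_const d).const_add y
  have hcomp := (hg (y + s • d)).hasGradientAt.hasFDerivAt.comp_hasDerivAt s hline
  rw [inner_sub_left]
  exact hcomp.sub (by simpa using (hasDerivAt_id s).mul_const ⟪gradient g y, d⟫)

lemma bregman_nonneg (hg : Differentiable ℝ g)
    (hmono : ∀ u v, 0 ≤ ⟪gradient g u - gradient g v, u - v⟫) (x y : E) :
    0 ≤ bregman g x y := by
  have hmon : MonotoneOn (fun s : ℝ => g (y + s • (x - y)) - s * ⟪gradient g y, x - y⟫)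
      (Set.Icc 0 1) := by
    refine monotoneOn_of_hasDerivWithinAt_nonneg (convex_Icc 0 1)
      (fun s _ => (hasDerivAt_comp_add_smul_sub_inner_gradient hg y (x - y) s).continuousAt
        |>.continuousWithinAt)
      (fun s _ => (hasDerivAt_comp_add_smul_sub_inner_gradient hg y (x - y) s).hasDerivWithinAt)
      fun s hs => ?_
    rw [interior_Icc] at hs
    have h := hmono (y + s • (x - y)) y
    rw [add_sub_cancel_left, inner_smul_right] at h
    exact nonneg_of_mul_nonneg_right h hs.1
  have h01 := hmon (by simp) (by simp) zero_le_one
  norm_num [-inner_gradient_left] at h01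
  unfold bregman
  linarith

lemma bregman_le_half_mul_norm_sq (hg : Differentiable ℝ g)
    (hLip : ∀ u v, ‖gradient g u - gradient g v‖ ≤ L * ‖u - v‖) (x y : E) :
    bregman g x y ≤ L / 2 * ‖x - y‖ ^ 2 := by
  set d := x - y
  have hanti : AntitoneOn (fun s : ℝ => g (y + s • d) - s * ⟪gradient g y, d⟫
      - L / 2 * s ^ 2 * ‖d‖ ^ 2) (Set.Icc 0 1) := by
    have hderiv (s : ℝ) : HasDerivAt (fun s : ℝ => g (y + s • d) - s * ⟪gradient g y, d⟫
        - L / 2 * s ^ 2 * ‖d‖ ^ 2)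
        (⟪gradient g (y + s • d) - gradient g y, d⟫ - L * s * ‖d‖ ^ 2) s := by
      have hquad : HasDerivAt (fun s : ℝ => L / 2 * s ^ 2 * ‖d‖ ^ 2) (L * s * ‖d‖ ^ 2) s := by
        refine (((hasDerivAt_pow 2 s).const_mul (L / 2)).mul_const (‖d‖ ^ 2)).congr_deriv ?_
        ring
      exact (hasDerivAt_comp_add_smul_sub_inner_gradient hg y d s).sub hquad
    refine antitoneOn_of_hasDerivWithinAt_nonpos (convex_Icc 0 1)
      (fun s _ => (hderiv s).continuousAt.continuousWithinAt)
      (fun s _ => (hderiv s).hasDerivWithinAt) fun s hs => ?_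
    rw [interior_Icc] at hs
    have hgrad : ‖gradient g (y + s • d) - gradient g y‖ ≤ L * (s * ‖d‖) := by
      simpa [norm_smul, abs_of_pos hs.1] using hLip (y + s • d) y
    have := (real_inner_le_norm _ _).trans (mul_le_mul_of_nonneg_right hgrad (norm_nonneg d))
    nlinarith
  have h01 := hanti (by simp) (by simp) zero_le_one
  norm_num [d, -inner_gradient_left] at h01
  unfold bregman
  linarith

lemma norm_gradient_sub_sq_le_bregman (hg : Differentiable ℝ g) (hL : 0 < L)
    (hLip : ∀ u v, ‖gradient g u - gradient g v‖ ≤ L * ‖u - v‖)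
    (hmono : ∀ u v, 0 ≤ ⟪gradient g u - gradient g v, u - v⟫) (x y : E) :
    ‖gradient g x - gradient g y‖ ^ 2 ≤ 2 * L * bregman g x y := by
  -- compare the two one-sided bounds at the gradient step `z = x - L⁻¹ (∇g x - ∇g y)`
  set G := gradient g x - gradient g y
  set z := x - L⁻¹ • G
  have hlow := bregman_nonneg hg hmono z y
  have hup := bregman_le_half_mul_norm_sq hg hLip z x
  have hzy : z - y = (x - y) - L⁻¹ • G := by simp only [z]; abel
  have hzx : z - x = -(L⁻¹ • G) := by simp only [z]; abel
  have hGG : ⟪gradient g x, G⟫ - ⟪gradient g y, G⟫ = ‖G‖ ^ 2 := by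
    rw [← inner_sub_left, real_inner_self_eq_norm_sq]
  unfold bregman at hlow hup ⊢
  rw [hzy, inner_sub_right, inner_smul_right] at hlow
  rw [hzx, inner_neg_right, inner_smul_right, norm_neg, norm_smul, mul_pow, Real.norm_eq_abs,
    abs_of_pos (inv_pos.mpr hL)] at hup
  have key : L⁻¹ * ‖G‖ ^ 2 / 2 ≤ g x - g y - ⟪gradient g y, x - y⟫ := by
    have hsq : L / 2 * (L⁻¹ ^ 2 * ‖G‖ ^ 2) = L⁻¹ * ‖G‖ ^ 2 / 2 := by field_simp
    have hinner : L⁻¹ * ⟪gradient g x, G⟫ - L⁻¹ * ⟪gradient g y, G⟫ = L⁻¹ * ‖G‖ ^ 2 := by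
      rw [← mul_sub, hGG]
    linarith
  calc ‖G‖ ^ 2 = 2 * L * (L⁻¹ * ‖G‖ ^ 2 / 2) := by field_simp
    _ ≤ _ := by gcongr

lemma norm_gradient_sq_le (hg : Differentiable ℝ g) (hL : 0 < L)
    (hLip : ∀ u v, ‖gradient g u - gradient g v‖ ≤ L * ‖u - v‖)
    (hmono : ∀ u v, 0 ≤ ⟪gradient g u - gradient g v, u - v⟫) (u v w x₀ : E) :
    ‖gradient g u‖ ^ 2 ≤ 6 * L ^ 2 * ‖u - v‖ ^ 2 + 6 * L ^ 2 * ‖v - w‖ ^ 2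
      + 6 * L * bregman g w x₀ + 3 * ‖gradient g x₀‖ ^ 2 := by
  have hsplit : gradient g u = (gradient g u - gradient g w)
      + (gradient g w - gradient g x₀) + gradient g x₀ := by abel
  have hnear : ‖gradient g u - gradient g w‖ ^ 2 ≤ L ^ 2 * (2 * (‖u - v‖ ^ 2 + ‖v - w‖ ^ 2)) := by
    calc ‖gradient g u - gradient g w‖ ^ 2 ≤ (L * ‖u - w‖) ^ 2 := by gcongr; exact hLip u w
      _ ≤ L ^ 2 * (‖u - v‖ + ‖v - w‖) ^ 2 := by
        rw [mul_pow]; gcongr; exact norm_sub_le_norm_sub_add_norm_sub u v w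
      _ ≤ _ := by gcongr; exact add_sq_le
  have hfar := norm_gradient_sub_sq_le_bregman hg hL hLip hmono w x₀
  rw [hsplit]
  nlinarith [norm_add₃_sq_le (gradient g u - gradient g w) (gradient g w - gradient g x₀)
    (gradient g x₀)]

end Bregman

lemma Fintype.expect_comp_eval {ι X M : Type*} [Fintype ι] [DecidableEq ι] [Fintype X]
    [Nonempty X] [AddCommMonoid M] [Module ℚ≥0 M] (j : ι) (h : X → M) :
    𝔼 π : ι → X, h (π j) = 𝔼 x, h x := by
  rw [Fintype.expect_equiv (Equiv.funSplitAt j X) (fun π => h (π j)) (fun q => h q.1)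
    fun _ => rfl, ← Finset.univ_product_univ, Finset.expect_product]
  simp only [Fintype.expect_const]

lemma Equiv.Perm.expect_apply {α M : Type*} [Fintype α] [DecidableEq α] [AddCommMonoid M]
    [Module ℚ≥0 M] (a : α) (F : α → M) : 𝔼 σ : Equiv.Perm α, F (σ a) = 𝔼 k, F k := by
  have : Nonempty α := ⟨a⟩
  -- right multiplication by `swap k a` shows that `σ k` and `σ a` are equidistributed
  have hswap (k : α) : 𝔼 σ : Equiv.Perm α, F (σ k) = 𝔼 σ : Equiv.Perm α, F (σ a) :=
    Fintype.expect_equiv (Equiv.mulRight (Equiv.swap k a)) _ _ fun σ => by simp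
  calc 𝔼 σ : Equiv.Perm α, F (σ a) = 𝔼 k, 𝔼 σ : Equiv.Perm α, F (σ k) := by
        simp only [hswap, Fintype.expect_const]
    _ = 𝔼 σ : Equiv.Perm α, 𝔼 k, F (σ k) := Finset.expect_comm _ _ _
    _ = 𝔼 _σ : Equiv.Perm α, 𝔼 k, F k :=
      Finset.expect_congr rfl fun σ _ => Fintype.expect_equiv σ _ _ fun _ => rfl
    _ = 𝔼 k, F k := Fintype.expect_const _

namespace DRR

section Expectation

variable {n m : ℕ}

lemma expE_eq_expect (T : ℕ) (g : Omega n m → ℝ) :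
    expE T g = 𝔼 σ : Fin T → Fin n → Equiv.Perm (Fin m),
      g fun k i => if h : k < T then σ ⟨k, h⟩ i else 1 :=
  (Fintype.expect_eq_sum_div_card _).symm

lemma expPerm_eq_expect (g : (Fin n → Equiv.Perm (Fin m)) → ℝ) : expPerm g = 𝔼 π, g π :=
  (Fintype.expect_eq_sum_div_card _).symm

lemma expE_mono {T : ℕ} {g h : Omega n m → ℝ} (hgh : ∀ ω, g ω ≤ h ω) : expE T g ≤ expE T h := by
  simp only [expE_eq_expect]
  exact Finset.expect_le_expect fun σ _ => hgh _

lemma expE_add (T : ℕ) (g h : Omega n m → ℝ) :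
    expE T (fun ω => g ω + h ω) = expE T g + expE T h := by
  simp only [expE_eq_expect, Finset.expect_add_distrib]

lemma expE_const_mul (T : ℕ) (a : ℝ) (g : Omega n m → ℝ) :
    expE T (fun ω => a * g ω) = a * expE T g := by
  simp only [expE_eq_expect, Finset.mul_expect]

lemma expE_comp_eval (t : ℕ) (g : (Fin n → Equiv.Perm (Fin m)) → ℝ) :
    expE (t + 1) (fun ω => g (ω t)) = expPerm g := by
  simp only [expE_eq_expect, expPerm_eq_expect, Nat.lt_add_one, dif_pos]
  exact Fintype.expect_comp_eval (Fin.last t) g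

lemma expPerm_sum_apply (ℓ : Fin m) (F : Fin n → Fin m → ℝ) :
    expPerm (fun π => ∑ i, F i (π i ℓ)) = ∑ i, 𝔼 k, F i k := by
  rw [expPerm_eq_expect, Finset.expect_sum_comm]
  refine Finset.sum_congr rfl fun i _ => ?_
  exact (Fintype.expect_comp_eval i fun σ : Equiv.Perm (Fin m) => F i (σ ℓ)).trans
    (Equiv.Perm.expect_apply ℓ (F i))

end Expectation

variable {n m p : ℕ} (f : Fin n → Fin m → Vec p → ℝ) (xstar : Vec p)

lemma sigStarSq_eq_expect : sigStarSq f xstar = 𝔼 i, 𝔼 k, ‖gradient (f i k) xstar‖ ^ 2 := by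
  simp only [sigStarSq, Fintype.expect_eq_sum_div_card, Fintype.card_fin, ← Finset.sum_div,
    mul_inv]
  ring

lemma natCast_mul_sigStarSq :
    n * sigStarSq f xstar = ∑ i, 𝔼 k, ‖gradient (f i k) xstar‖ ^ 2 := by
  simpa [sigStarSq_eq_expect] using
    Fintype.card_mul_expect fun i => 𝔼 k, ‖gradient (f i k) xstar‖ ^ 2

lemma expPerm_expect_bregman_le_sigShuffleSq (α : ℝ) (ℓ : Fin m) :
    expPerm (fun π => 𝔼 i, bregman (f i (π i ℓ)) (xbarStar f xstar α π ℓ) xstar)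
      ≤ sigShuffleSq f xstar α := by
  refine le_of_eq_of_le ?_ (le_ciSup (Set.finite_range _).bddAbove ℓ)
  congr 1
  funext π
  simp only [bregman, Fintype.expect_eq_sum_div_card, Fintype.card_fin, Finset.sum_sub_distrib,
    ← sum_inner, real_inner_smul_left]
  ring

lemma sum_norm_gradient_sq_le {g : Fin n → Vec p → ℝ} {L : ℝ}
    (hg : ∀ i, Differentiable ℝ (g i)) (hL : 0 < L)
    (hLip : ∀ i u v, ‖gradient (g i) u - gradient (g i) v‖ ≤ L * ‖u - v‖)
    (hmono : ∀ i u v, 0 ≤ ⟪gradient (g i) u - gradient (g i) v, u - v⟫)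
    (x : Fin n → Vec p) (w x₀ : Vec p) :
    ∑ i, ‖gradient (g i) (x i)‖ ^ 2
      ≤ 6 * L ^ 2 * n * ‖avg x - w‖ ^ 2 + 6 * L ^ 2 * consSq x
        + 3 * ∑ i, ‖gradient (g i) x₀‖ ^ 2 + 6 * n * L * 𝔼 i, bregman (g i) w x₀ := by
  calc ∑ i, ‖gradient (g i) (x i)‖ ^ 2
      ≤ ∑ i, (6 * L ^ 2 * ‖x i - avg x‖ ^ 2 + 6 * L ^ 2 * ‖avg x - w‖ ^ 2
          + 6 * L * bregman (g i) w x₀ + 3 * ‖gradient (g i) x₀‖ ^ 2) :=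
        Finset.sum_le_sum fun i _ =>
          norm_gradient_sq_le (hg i) hL (hLip i) (hmono i) (x i) (avg x) w x₀
    _ = _ := by
        have hmean : (n : ℝ) * 𝔼 i, bregman (g i) w x₀ = ∑ i, bregman (g i) w x₀ := by
          simpa using Fintype.card_mul_expect fun i => bregman (g i) w x₀
        simp only [Finset.sum_add_distrib, ← Finset.mul_sum, consSq, Finset.sum_const,
          Finset.card_univ, Fintype.card_fin, nsmul_eq_mul, ← hmean]
        ring

theorem drr_lemma12_general
    (n m p : ℕ)
    (μ L : ℝ) (hμ : 0 < μ) (hμL : μ ≤ L)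
    (f : Fin n → Fin m → Vec p → ℝ)
    (hdiff : ∀ i ℓ, Differentiable ℝ (f i ℓ))
    (hstrong : ∀ i ℓ (x y : Vec p),
      μ * ‖x - y‖ ^ 2 ≤ inner ℝ (gradient (f i ℓ) x - gradient (f i ℓ) y) (x - y))
    (hsmooth : ∀ i ℓ (x y : Vec p),
      ‖gradient (f i ℓ) x - gradient (f i ℓ) y‖ ≤ L * ‖x - y‖)
    (xstar : Vec p)
    (α : ℕ → ℝ)
    (x : Omega n m → ℕ → ℕ → Fin n → Vec p)
    :
    ∀ (t : ℕ) (ℓ : Fin m),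
      expE (t + 1) (fun ω => ∑ i, ‖gradient (f i (ω t i ℓ)) (x ω t (ℓ : ℕ) i)‖ ^ 2)
        ≤ 6 * L ^ 2 * n * expE (t + 1) (fun ω =>
              ‖avg (x ω t (ℓ : ℕ)) - xbarStar f xstar (α t) (ω t) (ℓ : ℕ)‖ ^ 2)
          + 6 * L ^ 2 * expE (t + 1) (fun ω => consSq (x ω t (ℓ : ℕ)))
          + 3 * n * sigStarSq f xstar + 6 * n * L * sigShuffleSq f xstar (α t) := by
  intro t ℓ
  have hL : 0 < L := hμ.trans_le hμL
  have hmono : ∀ i k (u v : Vec p), 0 ≤ ⟪gradient (f i k) u - gradient (f i k) v, u - v⟫ :=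
    fun i k u v => (mul_nonneg hμ.le (sq_nonneg _)).trans (hstrong i k u v)
  have hpoint (ω : Omega n m) := sum_norm_gradient_sq_le (fun i => hdiff i (ω t i ℓ))
    hL (fun i => hsmooth i (ω t i ℓ)) (fun i => hmono i (ω t i ℓ))
    (x ω t ℓ) (xbarStar f xstar (α t) (ω t) ℓ) xstar
  refine (expE_mono hpoint).trans ?_
  rw [expE_add, expE_add, expE_add, expE_const_mul, expE_const_mul, expE_const_mul,
    expE_const_mul, expE_comp_eval t fun π => ∑ i, ‖gradient (f i (π i ℓ)) xstar‖ ^ 2,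
    expE_comp_eval t fun π => 𝔼 i, bregman (f i (π i ℓ)) (xbarStar f xstar (α t) π ℓ) xstar,
    expPerm_sum_apply ℓ fun i k => ‖gradient (f i k) xstar‖ ^ 2, mul_assoc 3,
    natCast_mul_sigStarSq]
  gcongr
  exact expPerm_expect_bregman_le_sigShuffleSq f xstar (α t) ℓ

/-- **Lemma 12.** Bound on the expected squared Frobenius norm of the stacked shuffled gradients. -/
theorem drr_lemma12
    (n m p : ℕ) (hn : 0 < n) (hm : 0 < m)
    (W : Matrix (Fin n) (Fin n) ℝ)
    (hWpos : ∀ i j, 0 ≤ W i j) (hWsymm : W.IsSymm) (hWstoch : ∀ i, ∑ j, W i j = 1)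
    (hρ : rhoW W < 1)
    (μ L : ℝ) (hμ : 0 < μ) (hμL : μ ≤ L)
    (f : Fin n → Fin m → Vec p → ℝ)
    (hdiff : ∀ i ℓ, Differentiable ℝ (f i ℓ))
    (hstrong : ∀ i ℓ (x y : Vec p),
      μ * ‖x - y‖ ^ 2 ≤ inner ℝ (gradient (f i ℓ) x - gradient (f i ℓ) y) (x - y))
    (hsmooth : ∀ i ℓ (x y : Vec p),
      ‖gradient (f i ℓ) x - gradient (f i ℓ) y‖ ≤ L * ‖x - y‖)
    (xstar : Vec p)
    (hmin : ∀ y : Vec p,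
      ((m : ℝ) * n)⁻¹ * ∑ i, ∑ ℓ, f i ℓ xstar ≤ ((m : ℝ) * n)⁻¹ * ∑ i, ∑ ℓ, f i ℓ y)
    (α : ℕ → ℝ) (hαpos : ∀ t, 0 < α t)
    (x0 : Fin n → Vec p)
    (x : Omega n m → ℕ → ℕ → Fin n → Vec p)
    (hxinit : ∀ ω i, x ω 0 0 i = x0 i)
    (hxstep : ∀ ω t (ℓ : Fin m) i, x ω t ((ℓ : ℕ) + 1) i
      = ∑ j, W i j • (x ω t (ℓ : ℕ) j - α t • gradient (f j (ω t j ℓ)) (x ω t (ℓ : ℕ) j)))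
    (hxepoch : ∀ ω t i, x ω (t + 1) 0 i = x ω t m i)
    :
    ∀ (t : ℕ) (ℓ : Fin m),
      expE (t + 1) (fun ω => ∑ i, ‖gradient (f i (ω t i ℓ)) (x ω t (ℓ : ℕ) i)‖ ^ 2)
        ≤ 6 * L ^ 2 * n * expE (t + 1) (fun ω =>
              ‖avg (x ω t (ℓ : ℕ)) - xbarStar f xstar (α t) (ω t) (ℓ : ℕ)‖ ^ 2)
          + 6 * L ^ 2 * expE (t + 1) (fun ω => consSq (x ω t (ℓ : ℕ)))
          + 3 * n * sigStarSq f xstar + 6 * n * L * sigShuffleSq f xstar (α t) :=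
  drr_lemma12_general n m p μ L hμ hμL f hdiff hstrong hsmooth xstar α x

end DRR
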